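/- Let ρ : G̃ → G be as in the covering setup, with kernel K contained in the center of G̃, and let l ≥ 1. If x̃ = (ã₁,b̃₁,…,ã_l,b̃_l,c̃₁,c̃₂) and ỹ are elements of G̃^{2l+2} whose componentwise images under ρ agree and whose common image x satisfies η_G^l(x) = e, then η_{G̃}^l(x̃) and η_{G̃}^l(ỹ) both lie in K and have the same image in K/2K; moreover this common class in K/2K is unchanged if x is replaced by its simultaneous conjugate by any g ∈ G. Hence the obstruction map o₂ : (η_G^l)⁻¹(e) → K/2K is well defined and descends to the conjugation quotient. -/

import Mathlib

open scoped commutatorElement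

/-!
Since `K = ker ρ` is central, two lifts of the same point of `G^{2l+2}` differ by a tuple of
central elements `k`. Multiplying by central elements does not change commutators, and turns
`c₁² c₂²` into `c₁² c₂² (k_{c₁} k_{c₂})²`; so the two values of `η` differ by a square in `K`.
A conjugate of `x` by `g = ρ g̃` lifts to the conjugate of `x̃` by `g̃`, whose `η` is the conjugate
of the central element `η(x̃)`, i.e. `η(x̃)` itself.
-/

/-- The commutator map `μ_H^l : H^{2l} → H`,
`(a₁,b₁,…,a_l,b_l) ↦ a₁b₁a₁⁻¹b₁⁻¹ ⋯ a_l b_l a_l⁻¹ b_l⁻¹`, where the `2l`-tuple is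
encoded as an `l`-tuple of pairs `(aᵢ, bᵢ)`. -/
def commutatorMap {H : Type*} [Group H] {l : ℕ} (x : Fin l → H × H) : H :=
  (List.ofFn fun i => ⁅(x i).1, (x i).2⁆).prod

/-- The map `η_H^l : H^{2l+2} → H`,
`(a₁,b₁,…,a_l,b_l,c₁,c₂) ↦ μ_H^l(a₁,…,b_l)·c₁²·c₂²`. -/
def etaMap {H : Type*} [Group H] {l : ℕ} (x : (Fin l → H × H) × H × H) : H :=
  commutatorMap x.1 * x.2.1 ^ 2 * x.2.2 ^ 2

open Subgroup

theorem tuple_ext {H : Type*} {l : ℕ} {x y : (Fin l → H × H) × H × H}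
    (h : (∀ i, (x.1 i).1 = (y.1 i).1 ∧ (x.1 i).2 = (y.1 i).2) ∧ x.2.1 = y.2.1 ∧ x.2.2 = y.2.2) :
    x = y :=
  Prod.ext (funext fun i => Prod.ext (h.1 i).1 (h.1 i).2) (Prod.ext h.2.1 h.2.2)

section
variable {G H : Type*} [Group G] [Group H] {l : ℕ}

theorem commutatorElement_mul_mul_of_mem_center {a b k k' : G} (hk : k ∈ center G)
    (hk' : k' ∈ center G) : ⁅a * k, b * k'⁆ = ⁅a, b⁆ := by
  have hk'a : Commute (a * k) k' := mem_center_iff.mp hk' (a * k)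
  have hkb : Commute k b := (mem_center_iff.mp hk b).symm
  rw [commutatorElement_mul_right_eq_mul_conj, hk'a.commutator_eq, mul_one, mul_inv_cancel_right,
    commutatorElement_mul_left_eq_conj_mul, hkb.commutator_eq, mul_one, mul_inv_cancel, one_mul]

theorem mem_center_tuple_iff {x : (Fin l → G × G) × G × G} :
    x ∈ center ((Fin l → G × G) × G × G) ↔
      (∀ i, (x.1 i).1 ∈ center G ∧ (x.1 i).2 ∈ center G) ∧
        x.2.1 ∈ center G ∧ x.2.2 ∈ center G := by
  simp [Subgroup.center_prod, Subgroup.center_pi, Subgroup.mem_prod, Subgroup.mem_pi]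

theorem etaMap_mul_of_mem_center (x k : (Fin l → G × G) × G × G)
    (hk : k ∈ center ((Fin l → G × G) × G × G)) :
    etaMap (x * k) = etaMap x * (k.2.1 * k.2.2) ^ 2 := by
  obtain ⟨hk_pairs, hk₁, hk₂⟩ := mem_center_tuple_iff.mp hk
  have hcomm : commutatorMap (x * k).1 = commutatorMap x.1 := by
    simp only [commutatorMap, Prod.fst_mul, Pi.mul_apply, Prod.snd_mul]
    congr! 3 with i
    exact commutatorElement_mul_mul_of_mem_center (hk_pairs i).1 (hk_pairs i).2
  have c₁ : ∀ g, Commute g k.2.1 := mem_center_iff.mp hk₁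
  have c₂ : ∀ g, Commute g k.2.2 := mem_center_iff.mp hk₂
  rw [etaMap, etaMap, hcomm, Prod.snd_mul, Prod.fst_mul, Prod.snd_mul,
    (c₁ _).mul_pow, (c₂ _).mul_pow, (c₂ _).mul_pow]
  simp only [mul_assoc, ((c₁ _).pow_right 2).symm.left_comm]

def tupleMap (f : G →* H) (l : ℕ) : (Fin l → G × G) × G × G →* (Fin l → H × H) × H × H :=
  (MonoidHom.compLeft (f.prodMap f) (Fin l)).prodMap (f.prodMap f)

theorem map_etaMap (f : G →* H) (x : (Fin l → G × G) × G × G) :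
    f (etaMap x) = etaMap (tupleMap f l x) := by
  simp [etaMap, commutatorMap, tupleMap, map_list_prod, List.map_ofFn, Function.comp_def]

theorem mem_ker_tupleMap_iff {f : G →* H} {x : (Fin l → G × G) × G × G} :
    x ∈ (tupleMap f l).ker ↔
      (∀ i, (x.1 i).1 ∈ f.ker ∧ (x.1 i).2 ∈ f.ker) ∧ x.2.1 ∈ f.ker ∧ x.2.2 ∈ f.ker := by
  simp [tupleMap, Prod.ext_iff, funext_iff]

theorem ker_tupleMap_le_center {f : G →* H} (hker : f.ker ≤ center G) :
    (tupleMap f l).ker ≤ center ((Fin l → G × G) × G × G) := fun x hx => by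
  obtain ⟨hx_pairs, hx₁, hx₂⟩ := mem_ker_tupleMap_iff.mp hx
  exact mem_center_tuple_iff.mpr
    ⟨fun i => ⟨hker (hx_pairs i).1, hker (hx_pairs i).2⟩, hker hx₁, hker hx₂⟩

theorem tupleMap_conj (f : G →* H) (g : G) (x : (Fin l → G × G) × G × G) :
    tupleMap f l (tupleMap (MulAut.conj g) l x) =
      tupleMap (MulAut.conj (f g)) l (tupleMap f l x) := by
  change tupleMap (f.comp (MulAut.conj g)) l x =
    tupleMap ((MulAut.conj (f g) : H →* H).comp f) l x
  rw [show f.comp (MulAut.conj g) = (MulAut.conj (f g) : H →* H).comp f from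
    MonoidHom.ext fun a => by simp [MulAut.conj_apply]]

theorem exists_etaMap_eq_mul_sq_of_tupleMap_eq {f : G →* H} (hker : f.ker ≤ center G)
    {x y : (Fin l → G × G) × G × G} (h : tupleMap f l x = tupleMap f l y) :
    ∃ k ∈ f.ker, etaMap y = etaMap x * k ^ 2 := by
  have hd : x⁻¹ * y ∈ (tupleMap f l).ker := by simp [h]
  refine ⟨(x⁻¹ * y).2.1 * (x⁻¹ * y).2.2, ?_, ?_⟩
  · obtain ⟨-, hd₁, hd₂⟩ := mem_ker_tupleMap_iff.mp hd
    exact mul_mem hd₁ hd₂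
  · rw [← etaMap_mul_of_mem_center x _ (ker_tupleMap_le_center hker hd), mul_inv_cancel_left]

end

theorem obstruction_map_well_defined_even_nonorientable_general
    (Gt : Type*) [Group Gt]
    (G : Type*) [Group G]
    (ρ : Gt →* G) (hρsurj : Function.Surjective ρ)
    (hker : MonoidHom.ker ρ ≤ Subgroup.center Gt)
    (l : ℕ)
    (xt yt : (Fin l → Gt × Gt) × Gt × Gt)
    (hxy : (∀ i, ρ (xt.1 i).1 = ρ (yt.1 i).1 ∧ ρ (xt.1 i).2 = ρ (yt.1 i).2) ∧
      ρ xt.2.1 = ρ yt.2.1 ∧ ρ xt.2.2 = ρ yt.2.2)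
    (hx : etaMap ((fun i => (ρ (xt.1 i).1, ρ (xt.1 i).2)), ρ xt.2.1, ρ xt.2.2) = 1) :
    etaMap xt ∈ MonoidHom.ker ρ ∧ etaMap yt ∈ MonoidHom.ker ρ ∧
      (∃ k ∈ MonoidHom.ker ρ, etaMap xt = etaMap yt * k ^ 2) ∧
      ∀ (g : G) (zt : (Fin l → Gt × Gt) × Gt × Gt),
        ((∀ i, ρ (zt.1 i).1 = g * ρ (xt.1 i).1 * g⁻¹ ∧
            ρ (zt.1 i).2 = g * ρ (xt.1 i).2 * g⁻¹) ∧
          ρ zt.2.1 = g * ρ xt.2.1 * g⁻¹ ∧ ρ zt.2.2 = g * ρ xt.2.2 * g⁻¹) →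
        ∃ k ∈ MonoidHom.ker ρ, etaMap zt = etaMap xt * k ^ 2 := by
  have hρxy : tupleMap ρ l xt = tupleMap ρ l yt := tuple_ext hxy
  have hxK : etaMap xt ∈ ρ.ker := by rw [MonoidHom.mem_ker, map_etaMap]; exact hx
  refine ⟨hxK, by rwa [MonoidHom.mem_ker, map_etaMap, ← hρxy, ← map_etaMap],
    exists_etaMap_eq_mul_sq_of_tupleMap_eq hker hρxy.symm, fun g zt hz => ?_⟩
  obtain ⟨gt, rfl⟩ := hρsurj g
  have hconj : etaMap (tupleMap (MulAut.conj gt) l xt) = etaMap xt := by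
    rw [← map_etaMap, MonoidHom.coe_coe, MulAut.conj_apply,
      mem_center_iff.mp (hker hxK) gt, mul_inv_cancel_right]
  have hρz : tupleMap ρ l (tupleMap (MulAut.conj gt) l xt) = tupleMap ρ l zt := by
    rw [tupleMap_conj]; exact (tuple_ext hz).symm
  simpa only [hconj] using exists_etaMap_eq_mul_sq_of_tupleMap_eq hker hρz

/-- in the universal covering setup `ρ : G̃ → G` with central discrete
kernel `K`, if `xt, yt ∈ G̃^{2l+2}` have the same componentwise image `x` under `ρ` and
`η_G^l(x) = e`, then `η_{G̃}^l(xt)` and `η_{G̃}^l(yt)` lie in `K` and differ by a square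
of an element of `K` (i.e. have the same class in `K/2K`); moreover this class is
unchanged under simultaneous conjugation of `x` by any `g ∈ G`.  Hence the obstruction
map `o₂ : (η_G^l)⁻¹(e) → K/2K` is well defined and descends to the conjugation
quotient. -/
theorem obstruction_map_well_defined_even_nonorientable
    {E₁ : Type*} [NormedAddCommGroup E₁] [NormedSpace ℝ E₁]
    {H₁ : Type*} [TopologicalSpace H₁] (I₁ : ModelWithCorners ℝ E₁ H₁)
    (Gt : Type*) [TopologicalSpace Gt] [ChartedSpace H₁ Gt] [Group Gt]
    [IsTopologicalGroup Gt] [LieGroup I₁ (⊤ : ℕ∞) Gt]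
    [CompactSpace Gt] [ConnectedSpace Gt] [SimplyConnectedSpace Gt]
    [LieAlgebra.IsSemisimple ℝ (LeftInvariantDerivation I₁ Gt)]
    {E₂ : Type*} [NormedAddCommGroup E₂] [NormedSpace ℝ E₂]
    {H₂ : Type*} [TopologicalSpace H₂] (I₂ : ModelWithCorners ℝ E₂ H₂)
    (G : Type*) [TopologicalSpace G] [ChartedSpace H₂ G] [Group G]
    [IsTopologicalGroup G] [LieGroup I₂ (⊤ : ℕ∞) G]
    [CompactSpace G] [ConnectedSpace G]
    [LieAlgebra.IsSemisimple ℝ (LeftInvariantDerivation I₂ G)]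
    (ρ : Gt →* G) (hρcont : Continuous ρ) (hρsurj : Function.Surjective ρ)
    [DiscreteTopology ↥(MonoidHom.ker ρ)]
    (hker : MonoidHom.ker ρ ≤ Subgroup.center Gt)
    (l : ℕ) (hl : 1 ≤ l)
    (xt yt : (Fin l → Gt × Gt) × Gt × Gt)
    (hxy : (∀ i, ρ (xt.1 i).1 = ρ (yt.1 i).1 ∧ ρ (xt.1 i).2 = ρ (yt.1 i).2) ∧
      ρ xt.2.1 = ρ yt.2.1 ∧ ρ xt.2.2 = ρ yt.2.2)
    (hx : etaMap ((fun i => (ρ (xt.1 i).1, ρ (xt.1 i).2)), ρ xt.2.1, ρ xt.2.2) = 1) :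
    etaMap xt ∈ MonoidHom.ker ρ ∧ etaMap yt ∈ MonoidHom.ker ρ ∧
      (∃ k ∈ MonoidHom.ker ρ, etaMap xt = etaMap yt * k ^ 2) ∧
      ∀ (g : G) (zt : (Fin l → Gt × Gt) × Gt × Gt),
        ((∀ i, ρ (zt.1 i).1 = g * ρ (xt.1 i).1 * g⁻¹ ∧
            ρ (zt.1 i).2 = g * ρ (xt.1 i).2 * g⁻¹) ∧
          ρ zt.2.1 = g * ρ xt.2.1 * g⁻¹ ∧ ρ zt.2.2 = g * ρ xt.2.2 * g⁻¹) →
        ∃ k ∈ MonoidHom.ker ρ, etaMap zt = etaMap xt * k ^ 2 :=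
  obstruction_map_well_defined_even_nonorientable_general Gt G ρ hρsurj hker l xt yt hxy hx
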